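/- arXiv:1407.6283 — 3 statements merged into one kernel-verified Lean document; each statement's English description precedes it below -/
import Mathlib

section
/- In the monoid Υ associated to a group presentation 𝒫 = (X, 𝐫), every element of the submonoid 𝔘 is central; in fact σ(a)σ(a⁻¹)σ(b) = σ(b)σ(a)σ(a⁻¹) for all a, b ∈ Z. -/
universe u

namespace Wh

variable {X : Type u}

/-- The set of symbols `(ᵘr)^ε` for a presentation with relators `rels`:
`u` is a word of the free group, `r` a relator and `eps` the sign (`true` for `+1`). -/
structure Sym (X : Type u) (rels : Set (FreeGroup X)) where
  u : FreeGroup X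
  r : rels
  eps : Bool

variable {rels : Set (FreeGroup X)}

/-- The formal inverse `(ᵘr)^{-ε}` of a symbol `(ᵘr)^ε`. -/
def Sym.symInv (a : Sym X rels) : Sym X rels := ⟨a.u, a.r, !a.eps⟩

/-- `θ((ᵘr)^ε) = u r^ε u⁻¹`. -/
def Sym.theta (a : Sym X rels) : FreeGroup X :=
  a.u * (if a.eps then (a.r : FreeGroup X) else (a.r : FreeGroup X)⁻¹) * a.u⁻¹

/-- The conjugate `ᵛ((ᵘr)^ε) = (^{vu}r)^ε`. -/
def Sym.conj (v : FreeGroup X) (a : Sym X rels) : Sym X rels := ⟨v * a.u, a.r, a.eps⟩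

/-- The defining relations of the monoid `Υ` : `a ⬝ b = (^{θ(a)}b) ⬝ a`. -/
def upsRel (rels : Set (FreeGroup X)) :
    FreeMonoid (Sym X rels) → FreeMonoid (Sym X rels) → Prop := fun x y =>
  ∃ a b : Sym X rels, x = FreeMonoid.of a * FreeMonoid.of b ∧
    y = FreeMonoid.of (Sym.conj (Sym.theta a) b) * FreeMonoid.of a

/-- The congruence on the free monoid on `Z` generated by the defining relations of `Υ`. -/
def upsCon (rels : Set (FreeGroup X)) : Con (FreeMonoid (Sym X rels)) := conGen (upsRel rels)

/-- The monoid `Υ` presented on `Z` by the relations `a ⬝ b = (^{θ(a)}b) ⬝ a`. -/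
abbrev Ups (rels : Set (FreeGroup X)) := (upsCon rels).Quotient

/-- The canonical epimorphism `σ : FM(Z) → Υ`. -/
def sigma (rels : Set (FreeGroup X)) : FreeMonoid (Sym X rels) →* Ups rels := (upsCon rels).mk'

/-- The submonoid `𝔘` of `Υ` generated by the elements `σ(a)σ(a⁻¹)`, `a ∈ Z`. -/
def UU (rels : Set (FreeGroup X)) : Submonoid (Ups rels) :=
  Submonoid.closure
    {x | ∃ a : Sym X rels, x = sigma rels (FreeMonoid.of a * FreeMonoid.of a.symInv)}

/-- The monoid homomorphism `θ̄ : Υ → F` induced by `θ`. -/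
def thetaBar (rels : Set (FreeGroup X)) : Ups rels →* FreeGroup X :=
  (upsCon rels).lift (FreeMonoid.lift Sym.theta) (by
    apply Con.conGen_le.2
    rintro x y ⟨a, b, rfl, rfl⟩
    simp only [Con.ker_rel, map_mul, FreeMonoid.lift_eval_of]
    simp only [Sym.theta, Sym.conj]
    group)

/-- The relators of the group `𝒢(Υ)` : `a ⬝ b ⬝ ι((^{θ(a)}b) ⬝ a)`. -/
def grels (rels : Set (FreeGroup X)) : Set (FreeGroup (Sym X rels)) :=
  {x | ∃ a b : Sym X rels, x = FreeGroup.of a * FreeGroup.of b *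
      (FreeGroup.of (Sym.conj (Sym.theta a) b) * FreeGroup.of a)⁻¹}

/-- The universal enveloping group `𝒢(Υ)`. -/
abbrev GUps (rels : Set (FreeGroup X)) := PresentedGroup (grels rels)

/-- The canonical monoid homomorphism `μ : Υ → 𝒢(Υ)`. -/
def mu (rels : Set (FreeGroup X)) : Ups rels →* GUps rels :=
  (upsCon rels).lift (FreeMonoid.lift fun a => (PresentedGroup.of a : GUps rels)) (by
    apply Con.conGen_le.2
    rintro x y ⟨a, b, rfl, rfl⟩
    simp only [Con.ker_rel, map_mul, FreeMonoid.lift_eval_of]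
    have h2 : (QuotientGroup.mk (FreeGroup.of a * FreeGroup.of b *
        (FreeGroup.of (Sym.conj (Sym.theta a) b) * FreeGroup.of a)⁻¹) : GUps rels) = 1 :=
      (QuotientGroup.eq_one_iff _).2 (Subgroup.subset_normalClosure ⟨a, b, rfl⟩)
    rw [QuotientGroup.mk_mul, QuotientGroup.mk_inv, QuotientGroup.mk_mul,
      QuotientGroup.mk_mul, mul_inv_eq_one] at h2
    exact h2)

/-- The subgroup `𝔘̂` of `𝒢(Υ)` generated by `μ(𝔘)`. -/
def UUhat (rels : Set (FreeGroup X)) : Subgroup (GUps rels) :=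
  Subgroup.closure (mu rels '' (UU rels : Set (Ups rels)))

/-- The group homomorphism `θ̃ : 𝒢(Υ) → F` induced by `θ`. -/
def thetaTilde (rels : Set (FreeGroup X)) : GUps rels →* FreeGroup X :=
  PresentedGroup.toGroup (f := Sym.theta) (by
    rintro x ⟨a, b, rfl⟩
    simp only [map_mul, map_inv, FreeGroup.lift_apply_of]
    simp only [Sym.theta, Sym.conj]
    group)

/-- Peiffer equivalence `~_𝔘` on `Υ` : the equivalence relation generated by the pairs
`(x, x ⬝ σ(a)σ(a⁻¹))`. -/
def peifferEquiv (rels : Set (FreeGroup X)) : Ups rels → Ups rels → Prop :=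
  Relation.EqvGen fun x y => ∃ a : Sym X rels,
    y = x * sigma rels (FreeMonoid.of a * FreeMonoid.of a.symInv)

/-- The weak dominion of a submonoid `U` of a monoid `S`. -/
def WDom (S : Type u) [Monoid S] (U : Submonoid S) : Set S :=
  {d | ∀ (G : Type u) [Group G] (f g : S →* G), (∀ u ∈ U, f u = g u) → f d = g d}

/-- The `F`-action on `𝒢(Υ)` determined by `ʷ(μσ(a)) = μσ(ʷa)`. -/
def actF (rels : Set (FreeGroup X)) (w : FreeGroup X) : GUps rels →* GUps rels :=
  PresentedGroup.toGroup (f := fun a => (PresentedGroup.of (Sym.conj w a) : GUps rels)) (by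
    rintro x ⟨a, b, rfl⟩
    simp only [map_mul, map_inv, FreeGroup.lift_apply_of]
    have key : Sym.conj w (Sym.conj (Sym.theta a) b) =
        Sym.conj (Sym.theta (Sym.conj w a)) (Sym.conj w b) := by
      simp [Sym.conj, Sym.theta, mul_assoc]
      split_ifs with h <;> simp [h]
    rw [key]
    have h2 : (QuotientGroup.mk (FreeGroup.of (Sym.conj w a) * FreeGroup.of (Sym.conj w b) *
        (FreeGroup.of (Sym.conj (Sym.theta (Sym.conj w a)) (Sym.conj w b)) *
          FreeGroup.of (Sym.conj w a))⁻¹) : GUps rels) = 1 :=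
      (QuotientGroup.eq_one_iff _).2 (Subgroup.subset_normalClosure ⟨_, _, rfl⟩)
    rw [QuotientGroup.mk_mul, QuotientGroup.mk_inv, QuotientGroup.mk_mul,
      QuotientGroup.mk_mul] at h2
    exact h2)

lemma sigma_of_mul_of (a b : Sym X rels) :
    sigma rels (.of a) * sigma rels (.of b) =
      sigma rels (.of (b.conj a.theta)) * sigma rels (.of a) := by
  rw [← map_mul, ← map_mul]
  exact (Con.eq _).2 (ConGen.Rel.of _ _ ⟨a, b, rfl, rfl⟩)

lemma Sym.theta_symInv (a : Sym X rels) : a.symInv.theta = a.theta⁻¹ := by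
  rcases a with ⟨u, r, _ | _⟩ <;> simp [Sym.theta, Sym.symInv, mul_assoc]

lemma Sym.conj_conj (v w : FreeGroup X) (b : Sym X rels) :
    (b.conj w).conj v = b.conj (v * w) := by
  simp [Sym.conj, mul_assoc]

@[simp]
lemma Sym.conj_one (b : Sym X rels) : b.conj 1 = b := by
  simp [Sym.conj]

/-- Moving `b` left past `a⁻¹` and then past `a` conjugates it by `θ(a⁻¹)` and then by `θ(a)`,
which cancel. -/
lemma sigma_of_mul_symInv_mul_of (a b : Sym X rels) :
    sigma rels (.of a) * sigma rels (.of a.symInv) * sigma rels (.of b) =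
      sigma rels (.of b) * sigma rels (.of a) * sigma rels (.of a.symInv) := by
  have hcancel : (b.conj a.symInv.theta).conj a.theta = b := by
    rw [Sym.conj_conj, Sym.theta_symInv, mul_inv_cancel, Sym.conj_one]
  rw [mul_assoc, sigma_of_mul_of a.symInv b, ← mul_assoc, sigma_of_mul_of a, hcancel]

lemma closure_range_sigma_of :
    Submonoid.closure (Set.range fun b : Sym X rels => sigma rels (.of b)) = ⊤ := by
  rw [← FreeMonoid.mrange_lift, MonoidHom.mrange_eq_top]
  convert Con.mk'_surjective (c := upsCon rels)
  exact FreeMonoid.hom_eq fun _ => rfl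

lemma mem_center_of_commute_sigma_of {z : Ups rels}
    (hz : ∀ b : Sym X rels, sigma rels (.of b) * z = z * sigma rels (.of b)) :
    z ∈ Submonoid.center (Ups rels) := by
  rw [Submonoid.mem_center_iff]
  intro g
  induction g using Submonoid.dense_induction _ closure_range_sigma_of with
  | mem _ hg => obtain ⟨b, rfl⟩ := hg; exact hz b
  | one => simp
  | mul g h hg hh => rw [mul_assoc, hh, ← mul_assoc, hg, mul_assoc]

lemma UU_le_center : UU rels ≤ Submonoid.center (Ups rels) := by
  refine Submonoid.closure_le.2 ?_
  rintro _ ⟨a, rfl⟩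
  refine mem_center_of_commute_sigma_of fun b => ?_
  rw [map_mul, ← mul_assoc, sigma_of_mul_symInv_mul_of, mul_assoc]

/-- Lemma 1 (first part) of the paper: the elements of `𝔘` are central in `Υ`;
indeed `σ(a)σ(a⁻¹)σ(b) = σ(b)σ(a)σ(a⁻¹)` for all `a, b ∈ Z`. -/
theorem UU_central (rels : Set (FreeGroup X)) :
    (∀ a b : Sym X rels,
      sigma rels (FreeMonoid.of a) * sigma rels (FreeMonoid.of a.symInv) *
          sigma rels (FreeMonoid.of b) =
        sigma rels (FreeMonoid.of b) * sigma rels (FreeMonoid.of a) *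
          sigma rels (FreeMonoid.of a.symInv)) ∧
    (∀ u ∈ UU rels, ∀ x : Ups rels, u * x = x * u) := by
  refine ⟨sigma_of_mul_symInv_mul_of, fun u hu x => ?_⟩
  exact (Submonoid.mem_center_iff.1 (UU_le_center hu) x).symm

end Wh
end

section
/- Let S be a monoid, U a submonoid of S, and let μ : S → 𝒢 be a monoid homomorphism into a group 𝒢 having the universal property of the universal enveloping group of S: for every group H and every monoid homomorphism f : S → H there is a unique group homomorphism f̂ : 𝒢 → H with f̂ ∘ μ = f. Let Û be the subgroup of 𝒢 generated by μ(U). Then for every d ∈ S: d ∈ WDom_S(U) if and only if μ(d) ∈ Û. -/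
/-!
Every subgroup `H` of a group `G` is an equalizer: the two permutation representations of `G`
built in the proof that epimorphisms of groups are surjective agree exactly on `H`. Applied to
`H = Û` and composed with `μ`, they give two homomorphisms `S → Sym(X)` agreeing on `U`, so
`d ∈ WDom_S(U)` forces `μ(d) ∈ Û`. Conversely, homomorphisms `f, g : S → G` agreeing on `U`
factor through `μ` as `f̂, ĝ`, which agree on `μ(U)` and hence on `Û`.
-/

/-- The weak dominion of a submonoid `U` of a monoid `S`: all `d ∈ S` such that any two
monoid homomorphisms from `S` to a group that agree on `U` also agree on `d`. -/
def WDom (S : Type u) [Monoid S] (U : Submonoid S) : Set S :=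
  {d | ∀ (G : Type u) [Group G] (f g : S →* G), (∀ u ∈ U, f u = g u) → f d = g d}

theorem Subgroup.exists_eqLocus_eq {G : Type u} [Group G] (H : Subgroup G) :
    ∃ (K : Type u) (_ : Group K) (φ ψ : G →* K), φ.eqLocus ψ = H := by
  let ι : GrpCat.of H ⟶ GrpCat.of G := GrpCat.ofHom H.subtype
  refine ⟨_, inferInstance, GrpCat.SurjectiveOfEpiAuxs.h ι, GrpCat.SurjectiveOfEpiAuxs.g ι, ?_⟩
  ext x
  change x ∈ {x | _ = _} ↔ _
  rw [← GrpCat.SurjectiveOfEpiAuxs.agree ι]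
  exact Set.ext_iff.mp (congrArg SetLike.coe H.range_subtype) x

theorem map_mem_closure_of_mem_WDom {S G : Type u} [Monoid S] [Group G] {U : Submonoid S}
    (μ : S →* G) {d : S} (hd : d ∈ WDom S U) :
    μ d ∈ Subgroup.closure (μ '' (U : Set S)) := by
  obtain ⟨K, _, φ, ψ, hφψ⟩ := (Subgroup.closure (μ '' (U : Set S))).exists_eqLocus_eq
  have hU : ∀ u ∈ U, (φ.comp μ) u = (ψ.comp μ) u := fun u hu => by
    change μ u ∈ φ.eqLocus ψ
    exact hφψ ▸ Subgroup.subset_closure ⟨u, hu, rfl⟩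
  rw [← hφψ]
  exact hd K _ _ hU

theorem mem_WDom_of_map_mem_closure {S 𝒢 : Type u} [Monoid S] [Group 𝒢] {U : Submonoid S}
    (μ : S →* 𝒢) (hfactor : ∀ (H : Type u) [Group H] (f : S →* H), ∃ fhat : 𝒢 →* H, fhat.comp μ = f)
    {d : S} (hd : μ d ∈ Subgroup.closure (μ '' (U : Set S))) : d ∈ WDom S U := by
  intro G _ f g hfg
  obtain ⟨fhat, rfl⟩ := hfactor G f
  obtain ⟨ghat, rfl⟩ := hfactor G g
  have hU : Set.EqOn fhat ghat (μ '' (U : Set S)) := by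
    rintro _ ⟨u, hu, rfl⟩
    exact hfg u hu
  exact MonoidHom.eqOn_closure hU hd

/-- The analogue of the Stenström version of Isbell's zigzag theorem for the weak
dominion: if `μ : S → 𝒢` is the universal enveloping group of the monoid `S` and `Û` is
the subgroup of `𝒢` generated by `μ(U)`, then `d ∈ WDom_S(U)` if and only if
`μ(d) ∈ Û`. -/
theorem mem_WDom_iff_mu_mem_closure {S 𝒢 : Type u} [Monoid S] [Group 𝒢]
    (U : Submonoid S) (μ : S →* 𝒢)
    (huniv : ∀ (H : Type u) [Group H] (f : S →* H),
      ∃! fhat : 𝒢 →* H, fhat.comp μ = f)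
    (d : S) :
    d ∈ WDom S U ↔ μ d ∈ Subgroup.closure (⇑μ '' (U : Set S)) :=
  ⟨map_mem_closure_of_mem_WDom μ,
    mem_WDom_of_map_mem_closure μ fun H _ f => (huniv H f).exists⟩
end

section
/- For all w, w' ∈ F, η_w ∘ η_{w'} = η_{w w' w⁻¹} ∘ η_w; explicitly, for every n ∈ N both (η_w ∘ η_{w'})(n) and (η_{w w' w⁻¹} ∘ η_w)(n) equal ^{w w'}(∂n) · (∂n)⁻¹. (This is the computation showing that η, defined on the generators ᵘr P₁ of the free crossed module H₁/P₁ by η(ᵘr P₁) = η_{u r u⁻¹}, is a well-defined homomorphism into the Whitehead group D(N₀, H₀/P₀).) -/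
universe u v

/-- The map `η_w : N → T`, `η_w(n) = ʷ(∂n) ⬝ (∂n)⁻¹`, associated to an `F`-equivariant
isomorphism `∂ : N ≃* T` and an element `w ∈ F`. -/
def eta {F : Type u} {T : Type v} [Group F] [Group T] [MulDistribMulAction F T]
    {N : Subgroup F} (d : N ≃* T) (w : F) (n : N) : T :=
  (w • d n) * (d n)⁻¹

/-- For all `w, w' ∈ F`, `η_w ∘ η_{w'} = η_{w w' w⁻¹} ∘ η_w` in the derivation monoid
(where `(d₁ ∘ d₂)(n) = d₁(∂⁻¹(d₂(n)) ⬝ n) ⬝ d₂(n)`); explicitly, both sides evaluated at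
`n` equal `^{w w'}(∂n) ⬝ (∂n)⁻¹`. This is the computation showing that `η` is a
well-defined homomorphism into the Whitehead group. -/
theorem eta_comp_eq {F : Type u} {T : Type v} [Group F] [Group T]
    [MulDistribMulAction F T] {N : Subgroup F} [N.Normal] (d : N ≃* T)
    (hequiv : ∀ (f : F) (n : N) (h : f * (n : F) * f⁻¹ ∈ N), d ⟨f * (n : F) * f⁻¹, h⟩ = f • d n)
    (w w' : F) (n : N) :
    eta d w (d.symm (eta d w' n) * n) * eta d w' n = ((w * w') • d n) * (d n)⁻¹ ∧
    eta d (w * w' * w⁻¹) (d.symm (eta d w n) * n) * eta d w n =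
      ((w * w') • d n) * (d n)⁻¹ := by
  have key : ∀ (x : T) (m : N), d (d.symm x * m) = x * d m := fun x m => by
    rw [map_mul, d.apply_symm_apply]
  constructor
  · simp only [eta, key, mul_assoc, inv_mul_cancel_left, mul_smul]
    group
  · simp only [eta, key, mul_assoc, inv_mul_cancel_left, mul_smul]
    simp [smul_smul, mul_assoc]
end
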